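/- arXiv:1104.3487 — 4 statements merged into one kernel-verified Lean document; each statement's English description precedes it below -/
import Mathlib

section
/- Assume ζ_3 ≠ ζ_4. Then the tetrahedron weight factorizes as a product of two linear forms: (1/ζ_{34}) · (ζ_{23} a_{123} − ζ_{24} a_{124} + ζ_{34} a_{134}) · (ζ_{13} a_{123} − ζ_{14} a_{124} + ζ_{34} a_{234}) = f_{1234}. -/
/-!  Context: a Grassmann algebra `Λ` over a field `F` of characteristic ≠ 2, with
anticommuting generators indexed by a type `ι` (for us: the (3-element) subsets
`S ⊆ Fin 5`, possibly together with extra generators `b`).  Vertex `k ∈ {1,…,5}`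
of the paper corresponds to `k - 1 : Fin 5`, so `ζ_{ij} = ζ (i-1) - ζ (j-1)`.
The Berezin integral in a generator is axiomatized by the predicate `IsBerezin`. -/

/-- The subalgebra of elements not involving the generator `e i`, i.e. the
subalgebra generated by all the other generators. -/
def notInvolving (F : Type*) [Field F] {Λ : Type*} [Ring Λ] [Algebra F Λ]
    {ι : Type*} (e : ι → Λ) (i : ι) : Subalgebra F Λ :=
  Algebra.adjoin F { x | ∃ j, j ≠ i ∧ x = e j }

/-- `B` is the Berezin integral with respect to the generator `e i`: it is `F`-linear
and, writing `x = g + h * e i` with `g`, `h` not involving `e i` (the generator moved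
to the rightmost position), one has `B x = h`.  Equivalently: `B g = 0` and
`B (h * e i) = h` for `g`, `h` not involving `e i`. -/
def IsBerezin (F : Type*) [Field F] {Λ : Type*} [Ring Λ] [Algebra F Λ]
    {ι : Type*} (e : ι → Λ) (i : ι) (B : Λ →ₗ[F] Λ) : Prop :=
  (∀ g ∈ notInvolving F e i, B g = 0) ∧
  (∀ h ∈ notInvolving F e i, B (h * e i) = h)

/-- The tetrahedron weight `f_{i₁i₂i₃i₄}` (formula (1) of the paper), where
`a S` is the Grassmann generator attached to the unoriented 2-face `S`. -/
def fw {F : Type*} [Field F] {Λ : Type*} [Ring Λ] [Algebra F Λ]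
    (ζ : Fin 5 → F) (a : Finset (Fin 5) → Λ) (i₁ i₂ i₃ i₄ : Fin 5) : Λ :=
  (ζ i₁ - ζ i₂) • (a {i₁, i₂, i₃} * a {i₁, i₂, i₄})
    - (ζ i₁ - ζ i₃) • (a {i₁, i₂, i₃} * a {i₁, i₃, i₄})
    + (ζ i₁ - ζ i₄) • (a {i₁, i₂, i₄} * a {i₁, i₃, i₄})
    + (ζ i₂ - ζ i₃) • (a {i₁, i₂, i₃} * a {i₂, i₃, i₄})
    - (ζ i₂ - ζ i₄) • (a {i₁, i₂, i₄} * a {i₂, i₃, i₄})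
    + (ζ i₃ - ζ i₄) • (a {i₁, i₃, i₄} * a {i₂, i₃, i₄})

/-! The product of two linear forms in anticommuting square-zero generators is the 2-form whose
coefficients are the 2 × 2 minors of the two coefficient vectors. For the two forms at hand,
each minor is `ζ₃₄` times the corresponding coefficient of `f₁₂₃₄`; e.g. the coefficient of
`a₁₂₃ a₁₂₄` is `ζ₂₄ ζ₁₃ − ζ₂₃ ζ₁₄ = ζ₃₄ ζ₁₂`. -/

open Finset

theorem sum_smul_mul_sum_smul_of_anticommute {R A ι : Type*} [CommRing R] [Ring A]
    [Algebra R A] [Fintype ι] [LinearOrder ι] {e : ι → A}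
    (hanti : ∀ i j, e i * e j = -(e j * e i)) (hsq : ∀ i, e i * e i = 0) (c d : ι → R) :
    (∑ i, c i • e i) * (∑ j, d j • e j) =
      ∑ i, ∑ j with i < j, (c i * d j - c j * d i) • (e i * e j) := by
  set g : ι → ι → A := fun i j => (c i * d j) • (e i * e j)
  have hswap : ∀ i j, g i j + g j i = (c i * d j - c j * d i) • (e i * e j) := by
    intro i j
    simp only [g, hanti j i]
    module
  have hflip : ∑ i, ∑ j with j < i, g i j = ∑ i, ∑ j with i < j, g j i := by
    simp only [sum_filter]
    exact sum_comm
  calc (∑ i, c i • e i) * (∑ j, d j • e j) = ∑ i, ∑ j, g i j := by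
        simp only [sum_mul_sum, smul_mul_smul_comm, g]
    _ = ∑ i, ∑ j with i < j, g i j + ∑ i, ∑ j with j < i, g i j := by
        rw [← sum_add_distrib]
        refine sum_congr rfl fun i _ => ?_
        rw [sum_filter, sum_filter, ← sum_add_distrib]
        refine sum_congr rfl fun j _ => ?_
        rcases lt_trichotomy i j with h | rfl | h
        · simp [h, h.not_gt]
        · simp [g, hsq]
        · simp [h, h.not_gt]
    _ = ∑ i, ∑ j with i < j, (c i * d j - c j * d i) • (e i * e j) := by
        simp only [hflip, ← sum_add_distrib, hswap]

theorem fw_factorization_general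
    {F : Type*} [Field F] {Λ : Type*} [Ring Λ] [Algebra F Λ]
    (ζ : Fin 5 → F)
    (h34 : ζ 2 ≠ ζ 3)
    (a : Finset (Fin 5) → Λ)
    (hanti : ∀ S T, a S * a T = -(a T * a S))
    (hsq : ∀ S, a S * a S = 0)
 :
    (ζ 2 - ζ 3)⁻¹ •
        (((ζ 1 - ζ 2) • a {0, 1, 2} - (ζ 1 - ζ 3) • a {0, 1, 3} + (ζ 2 - ζ 3) • a {0, 2, 3}) *
          ((ζ 0 - ζ 2) • a {0, 1, 2} - (ζ 0 - ζ 3) • a {0, 1, 3} + (ζ 2 - ζ 3) • a {1, 2, 3})) =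
      fw ζ a 0 1 2 3 := by
  let e : Fin 4 → Λ := a ∘ ![{0, 1, 2}, {0, 1, 3}, {0, 2, 3}, {1, 2, 3}]
  have hL₁ : (ζ 1 - ζ 2) • a {0, 1, 2} - (ζ 1 - ζ 3) • a {0, 1, 3} + (ζ 2 - ζ 3) • a {0, 2, 3} =
      ∑ i, ![ζ 1 - ζ 2, -(ζ 1 - ζ 3), ζ 2 - ζ 3, 0] i • e i := by
    simp only [Fin.sum_univ_four, e, Function.comp_apply, Matrix.cons_val]
    module
  have hL₂ : (ζ 0 - ζ 2) • a {0, 1, 2} - (ζ 0 - ζ 3) • a {0, 1, 3} + (ζ 2 - ζ 3) • a {1, 2, 3} =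
      ∑ i, ![ζ 0 - ζ 2, -(ζ 0 - ζ 3), 0, ζ 2 - ζ 3] i • e i := by
    simp only [Fin.sum_univ_four, e, Function.comp_apply, Matrix.cons_val]
    module
  rw [inv_smul_eq_iff₀ (sub_ne_zero.mpr h34), hL₁, hL₂,
    sum_smul_mul_sum_smul_of_anticommute (e := e) (fun _ _ => hanti _ _) (fun _ => hsq _)]
  simp only [sum_filter, Fin.sum_univ_four, e, fw, Function.comp_apply, Matrix.cons_val,
    Fin.reduceLT, lt_self_iff_false, ↓reduceIte]
  module

/-- The tetrahedron weight factorizes as a product of two linear forms: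
`f₁₂₃₄ = (1/ζ₃₄)(ζ₂₃ a₁₂₃ − ζ₂₄ a₁₂₄ + ζ₃₄ a₁₃₄)(ζ₁₃ a₁₂₃ − ζ₁₄ a₁₂₄ + ζ₃₄ a₂₃₄)`. -/
theorem fw_factorization
    {F : Type*} [Field F] {Λ : Type*} [Ring Λ] [Algebra F Λ]
    (hchar : (2 : F) ≠ 0)
    (ζ : Fin 5 → F)
    (h34 : ζ 2 ≠ ζ 3)
    (a : Finset (Fin 5) → Λ)
    (hanti : ∀ S T, a S * a T = -(a T * a S))
    (hsq : ∀ S, a S * a S = 0)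
 :
    (ζ 2 - ζ 3)⁻¹ •
        (((ζ 1 - ζ 2) • a {0, 1, 2} - (ζ 1 - ζ 3) • a {0, 1, 3} + (ζ 2 - ζ 3) • a {0, 2, 3}) *
          ((ζ 0 - ζ 2) • a {0, 1, 2} - (ζ 0 - ζ 3) • a {0, 1, 3} + (ζ 2 - ζ 3) • a {1, 2, 3})) =
      fw ζ a 0 1 2 3 :=
  fw_factorization_general ζ h34 a hanti hsq
end

section
/- Assume ζ_3 ≠ ζ_4. Then the Gaussian integral representation ∬ exp(Φ_{1234}) db^{(1)} db^{(2)} = f_{1234} holds (integration over b^{(1)} first, then b^{(2)}). -/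
/-- The (terminating) Taylor series of the exponential of a nilpotent element:
`exp x = Σ_{n < N} xⁿ/n!`, where `N` is any bound with `x ^ N = 0`. -/
def expT (F : Type*) [Field F] {Λ : Type*} [Ring Λ] [Algebra F Λ] (N : ℕ) (x : Λ) : Λ :=
  ∑ n ∈ Finset.range N, ((n.factorial : F))⁻¹ • x ^ n

/-- The bilinear form `Φ_{i₁i₂i₃i₄}` (formula (6) of the paper):
`Φ = b⁽¹⁾(ζ_{i₂i₃} a_{i₁i₂i₃} − ζ_{i₂i₄} a_{i₁i₂i₄} + ζ_{i₃i₄} a_{i₁i₃i₄})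
   + b⁽²⁾((ζ_{i₁i₃}/ζ_{i₃i₄}) a_{i₁i₂i₃} − (ζ_{i₁i₄}/ζ_{i₃i₄}) a_{i₁i₂i₄} + a_{i₂i₃i₄})`,
where `e (Sum.inl S) = a_S` and `e (Sum.inr b₁)`, `e (Sum.inr b₂)` are the two
extra generators `b⁽¹⁾`, `b⁽²⁾` attached to the tetrahedron. -/
def PhiT {F : Type*} [Field F] {Λ : Type*} [Ring Λ] [Algebra F Λ] {β : Type*}
    (ζ : Fin 5 → F) (e : Finset (Fin 5) ⊕ β → Λ) (b₁ b₂ : β) (i₁ i₂ i₃ i₄ : Fin 5) : Λ :=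
  e (Sum.inr b₁) *
      ((ζ i₂ - ζ i₃) • e (Sum.inl {i₁, i₂, i₃}) - (ζ i₂ - ζ i₄) • e (Sum.inl {i₁, i₂, i₄})
        + (ζ i₃ - ζ i₄) • e (Sum.inl {i₁, i₃, i₄}))
    + e (Sum.inr b₂) *
      (((ζ i₁ - ζ i₃) / (ζ i₃ - ζ i₄)) • e (Sum.inl {i₁, i₂, i₃})
        - ((ζ i₁ - ζ i₄) / (ζ i₃ - ζ i₄)) • e (Sum.inl {i₁, i₂, i₄})
        + e (Sum.inl {i₂, i₃, i₄}))

/-! The generators `b⁽¹⁾, b⁽²⁾` and the coefficients `A`, `C` of `Φ = b⁽¹⁾ A + b⁽²⁾ C` all lie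
in the span of the generators, where any two elements anticommute. Hence
`Φ² = -2 b⁽¹⁾ b⁽²⁾ A C`, so `exp Φ = 1 + Φ - b⁽¹⁾ b⁽²⁾ A C`, and the double Berezin integral
picks out `A C`. Expanding `A C` gives `f₁₂₃₄`; the coefficient of `a₁₂₃ a₁₂₄` matches by the
identity `ζ₁₃ ζ₂₄ - ζ₁₄ ζ₂₃ = ζ₁₂ ζ₃₄`. -/

section Anticommuting

variable {F : Type*} [Field F] {Λ : Type*} [Ring Λ] [Algebra F Λ]

lemma mul_eq_neg_mul_of_mem_span {ι : Type*} {e : ι → Λ} (hanti : ∀ i j, e i * e j = -(e j * e i))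
    {x y : Λ} (hx : x ∈ Submodule.span F (Set.range e))
    (hy : y ∈ Submodule.span F (Set.range e)) : x * y = -(y * x) := by
  induction hx, hy using Submodule.span_induction₂ with
  | mem_mem u v hu hv =>
      obtain ⟨i, rfl⟩ := hu; obtain ⟨j, rfl⟩ := hv; exact hanti i j
  | zero_left y hy => simp
  | zero_right x hx => simp
  | add_left x y z hx hy hz h1 h2 => rw [add_mul, h1, h2, mul_add]; abel
  | add_right x y z hx hy hz h1 h2 => rw [mul_add, h1, h2, add_mul]; abel
  | smul_left r x y hx hy h => rw [smul_mul_assoc, h, mul_smul_comm, smul_neg]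
  | smul_right r x y hx hy h => rw [mul_smul_comm, h, smul_mul_assoc, smul_neg]

lemma mul_self_eq_zero_of_eq_neg (hchar : (2 : F) ≠ 0) {x : Λ} (hx : x * x = -(x * x)) :
    x * x = 0 := by
  have h : (2 : F) • (x * x) = 0 := by rw [two_smul]; nth_rw 1 [hx]; exact neg_add_cancel _
  exact (smul_eq_zero.mp h).resolve_left hchar

omit [Algebra F Λ] in
lemma mul_mul_eq_neg_mul_mul {a b : Λ} (h : a * b = -(b * a)) (t : Λ) :
    a * (b * t) = -(b * (a * t)) := by
  rw [← mul_assoc, h, neg_mul, mul_assoc]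

omit [Algebra F Λ] in
lemma mul_mul_eq_zero_of_mul_self_eq_zero {a : Λ} (h : a * a = 0) (t : Λ) : a * (a * t) = 0 := by
  rw [← mul_assoc, h, zero_mul]

lemma expT_three (x : Λ) : expT F 3 x = 1 + x + (2 : F)⁻¹ • (x * x) := by
  simp [expT, Finset.sum_range_succ, Nat.factorial, pow_two, add_assoc]

lemma expT_three_add_mul (hchar : (2 : F) ≠ 0) {V : Submodule F Λ}
    (hV : ∀ u ∈ V, ∀ v ∈ V, u * v = -(v * u)) {x y z w : Λ}
    (hx : x ∈ V) (hy : y ∈ V) (hz : z ∈ V) (hw : w ∈ V) :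
    expT F 3 (x * z + y * w) = (1 + y * w) + (-z + y * (z * w)) * x := by
  have hxx := mul_self_eq_zero_of_eq_neg hchar (hV x hx x hx)
  have hyy := mul_self_eq_zero_of_eq_neg hchar (hV y hy y hy)
  have hzx := hV z hz x hx
  have hwx := hV w hw x hx
  have hyx := hV y hy x hx
  have hzy := hV z hz y hy
  have hwy := hV w hw y hy
  have hwz := hV w hw z hz
  have hsq : (x * z + y * w) * (x * z + y * w) = -((2 : F) • (x * (y * (z * w)))) := by
    -- sort every monomial into the order `x, y, z, w`
    simp only [add_mul, mul_add, mul_assoc, mul_neg, neg_neg, hwz,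
      mul_mul_eq_neg_mul_mul hzx, mul_mul_eq_neg_mul_mul hwx, mul_mul_eq_neg_mul_mul hyx,
      mul_mul_eq_neg_mul_mul hzy, mul_mul_eq_neg_mul_mul hwy,
      mul_mul_eq_zero_of_mul_self_eq_zero hxx, mul_mul_eq_zero_of_mul_self_eq_zero hyy]
    rw [two_smul]
    abel
  rw [expT_three, hsq, smul_neg, smul_smul, inv_mul_cancel₀ hchar, one_smul]
  simp only [add_mul, neg_mul, mul_neg, neg_neg, mul_assoc, hzx, hwx, mul_mul_eq_neg_mul_mul hzx,
    mul_mul_eq_neg_mul_mul hyx]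
  abel

end Anticommuting

section Berezin

variable {F : Type*} [Field F] {Λ : Type*} [Ring Λ] [Algebra F Λ] {ι : Type*} {e : ι → Λ} {i : ι}

lemma IsBerezin.map_add_mul {B : Λ →ₗ[F] Λ} (hB : IsBerezin F e i B) {g h : Λ}
    (hg : g ∈ notInvolving F e i) (hh : h ∈ notInvolving F e i) : B (g + h * e i) = h := by
  rw [map_add, hB.1 g hg, hB.2 h hh, zero_add]

lemma span_image_le_notInvolving {s : Set ι} (hi : i ∉ s) :
    Submodule.span F (e '' s) ≤ Subalgebra.toSubmodule (notInvolving F e i) :=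
  (Submodule.span_mono (by rintro _ ⟨j, hj, rfl⟩; exact ⟨j, ne_of_mem_of_not_mem hj hi, rfl⟩)).trans
    (Algebra.span_le_adjoin F _)

theorem berezin_berezin_expT_gaussian (hchar : (2 : F) ≠ 0)
    (hanti : ∀ i j, e i * e j = -(e j * e i)) {j : ι} (hij : i ≠ j) {s : Set ι} (hi : i ∉ s)
    (hj : j ∉ s) {A C : Λ} (hA : A ∈ Submodule.span F (e '' s))
    (hC : C ∈ Submodule.span F (e '' s)) {B₁ B₂ : Λ →ₗ[F] Λ} (hB₁ : IsBerezin F e i B₁)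
    (hB₂ : IsBerezin F e j B₂) :
    B₂ (B₁ (expT F 3 (e i * A + e j * C))) = A * C := by
  have hV : ∀ u ∈ Submodule.span F (Set.range e), ∀ v ∈ Submodule.span F (Set.range e),
      u * v = -(v * u) := fun u hu v hv => mul_eq_neg_mul_of_mem_span hanti hu hv
  have he : ∀ k, e k ∈ Submodule.span F (Set.range e) := fun k => Submodule.subset_span ⟨k, rfl⟩
  have hsV := Submodule.span_mono (R := F) (Set.image_subset_range e s)
  have hAi := span_image_le_notInvolving hi hA
  have hCi := span_image_le_notInvolving hi hC
  have hAj := span_image_le_notInvolving hj hA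
  have hCj := span_image_le_notInvolving hj hC
  have hji : e j ∈ notInvolving F e i := Algebra.subset_adjoin ⟨j, hij.symm, rfl⟩
  have hAC : e j * (A * C) = A * C * e j := by
    rw [← mul_assoc, hV _ (he j) _ (hsV hA), neg_mul, mul_assoc, hV _ (he j) _ (hsV hC), mul_neg,
      neg_neg, mul_assoc]
  rw [expT_three_add_mul hchar hV (he i) (he j) (hsV hA) (hsV hC),
    hB₁.map_add_mul (add_mem (one_mem _) (mul_mem hji hCi))
      (add_mem (neg_mem hAi) (mul_mem hji (mul_mem hAi hCi))),
    hAC, hB₂.map_add_mul (neg_mem hAj) (mul_mem hAj hCj)]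

end Berezin

section Tetrahedron

variable {F : Type*} [Field F] {Λ : Type*} [Ring Λ] [Algebra F Λ]

def phiCoeff₁ (ζ : Fin 5 → F) (a : Finset (Fin 5) → Λ) (i₁ i₂ i₃ i₄ : Fin 5) : Λ :=
  (ζ i₂ - ζ i₃) • a {i₁, i₂, i₃} - (ζ i₂ - ζ i₄) • a {i₁, i₂, i₄} + (ζ i₃ - ζ i₄) • a {i₁, i₃, i₄}

def phiCoeff₂ (ζ : Fin 5 → F) (a : Finset (Fin 5) → Λ) (i₁ i₂ i₃ i₄ : Fin 5) : Λ :=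
  ((ζ i₁ - ζ i₃) / (ζ i₃ - ζ i₄)) • a {i₁, i₂, i₃}
    - ((ζ i₁ - ζ i₄) / (ζ i₃ - ζ i₄)) • a {i₁, i₂, i₄} + a {i₂, i₃, i₄}

lemma PhiT_eq_add {β : Type*} (ζ : Fin 5 → F) (e : Finset (Fin 5) ⊕ β → Λ) (b₁ b₂ : β)
    (i₁ i₂ i₃ i₄ : Fin 5) :
    PhiT ζ e b₁ b₂ i₁ i₂ i₃ i₄ = e (Sum.inr b₁) * phiCoeff₁ ζ (e ∘ Sum.inl) i₁ i₂ i₃ i₄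
      + e (Sum.inr b₂) * phiCoeff₂ ζ (e ∘ Sum.inl) i₁ i₂ i₃ i₄ :=
  rfl

variable (ζ : Fin 5 → F) (a : Finset (Fin 5) → Λ) (i₁ i₂ i₃ i₄ : Fin 5)

lemma phiCoeff₁_mem_span : phiCoeff₁ ζ a i₁ i₂ i₃ i₄ ∈ Submodule.span F (Set.range a) := by
  have ha : ∀ S, a S ∈ Submodule.span F (Set.range a) := fun S => Submodule.subset_span ⟨S, rfl⟩
  exact add_mem (sub_mem (Submodule.smul_mem _ _ (ha _)) (Submodule.smul_mem _ _ (ha _)))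
    (Submodule.smul_mem _ _ (ha _))

lemma phiCoeff₂_mem_span : phiCoeff₂ ζ a i₁ i₂ i₃ i₄ ∈ Submodule.span F (Set.range a) := by
  have ha : ∀ S, a S ∈ Submodule.span F (Set.range a) := fun S => Submodule.subset_span ⟨S, rfl⟩
  exact add_mem (sub_mem (Submodule.smul_mem _ _ (ha _)) (Submodule.smul_mem _ _ (ha _))) (ha _)

lemma phiCoeff₁_mul_phiCoeff₂ (hchar : (2 : F) ≠ 0) (hanti : ∀ S T, a S * a T = -(a T * a S))
    (h34 : ζ i₃ ≠ ζ i₄) :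
    phiCoeff₁ ζ a i₁ i₂ i₃ i₄ * phiCoeff₂ ζ a i₁ i₂ i₃ i₄ = fw ζ a i₁ i₂ i₃ i₄ := by
  have hsq : ∀ S, a S * a S = 0 := fun S => mul_self_eq_zero_of_eq_neg hchar (hanti S S)
  have h34' : ζ i₃ - ζ i₄ ≠ 0 := sub_ne_zero.mpr h34
  simp only [phiCoeff₁, phiCoeff₂, fw, add_mul, sub_mul, mul_add, mul_sub, smul_mul_assoc,
    mul_smul_comm, hanti {i₁, i₂, i₄} {i₁, i₂, i₃}, hanti {i₁, i₃, i₄} {i₁, i₂, i₃},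
    hanti {i₁, i₃, i₄} {i₁, i₂, i₄}, hsq, smul_neg, smul_zero]
  match_scalars <;> field_simp
  ring

end Tetrahedron

theorem gaussian_f_general
    {F : Type*} [Field F] {Λ : Type*} [Ring Λ] [Algebra F Λ]
    (hchar : (2 : F) ≠ 0)
    (ζ : Fin 5 → F)
    (h34 : ζ 2 ≠ ζ 3)
    (e : Finset (Fin 5) ⊕ Fin 2 → Λ)
    (hanti : ∀ i j, e i * e j = -(e j * e i))
    (B1 B2 : Λ →ₗ[F] Λ)
    (hB1 : IsBerezin F e (Sum.inr 0) B1)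
    (hB2 : IsBerezin F e (Sum.inr 1) B2) :
    B2 (B1 (expT F 3 (PhiT ζ e 0 1 0 1 2 3))) =
      fw ζ (fun S => e (Sum.inl S)) 0 1 2 3 := by
  have hmem₁ := Set.range_comp e Sum.inl ▸ phiCoeff₁_mem_span ζ (e ∘ Sum.inl) 0 1 2 3
  have hmem₂ := Set.range_comp e Sum.inl ▸ phiCoeff₂_mem_span ζ (e ∘ Sum.inl) 0 1 2 3
  rw [PhiT_eq_add, berezin_berezin_expT_gaussian hchar hanti (by simp) (by simp) (by simp)
    hmem₁ hmem₂ hB1 hB2]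
  exact phiCoeff₁_mul_phiCoeff₂ ζ _ 0 1 2 3 hchar (fun S T => hanti (.inl S) (.inl T)) h34

/-- Gaussian integral representation of the tetrahedron weight (formula (8) of the
paper): `∬ exp(Φ₁₂₃₄) db⁽¹⁾ db⁽²⁾ = f₁₂₃₄` (integration over `b⁽¹⁾` first, then
`b⁽²⁾`).  Here `exp(Φ₁₂₃₄)` terminates: `Φ₁₂₃₄ ^ 3 = 0`. -/
theorem gaussian_f
    {F : Type*} [Field F] {Λ : Type*} [Ring Λ] [Algebra F Λ]
    (hchar : (2 : F) ≠ 0)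
    (ζ : Fin 5 → F)
    (h34 : ζ 2 ≠ ζ 3)
    (e : Finset (Fin 5) ⊕ Fin 2 → Λ)
    (hanti : ∀ i j, e i * e j = -(e j * e i))
    (hsq : ∀ i, e i * e i = 0)
    (B1 B2 : Λ →ₗ[F] Λ)
    (hB1 : IsBerezin F e (Sum.inr 0) B1)
    (hB2 : IsBerezin F e (Sum.inr 1) B2) :
    B2 (B1 (expT F 3 (PhiT ζ e 0 1 0 1 2 3))) =
      fw ζ (fun S => e (Sum.inl S)) 0 1 2 3 :=
  gaussian_f_general hchar ζ h34 e hanti B1 B2 hB1 hB2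
end

section
/- Assume ζ_4 ≠ ζ_5 and let λ ∈ F. Then both differences ∫ g_{1234} g_{1235} da_{123} − ∫ f_{1234} f_{1235} da_{123} and (1/ζ_{45})·(∭ g_{1245} g_{2345} g_{1345} da_{345} da_{245} da_{145} − ∭ f_{1245} f_{2345} f_{1345} da_{345} da_{245} da_{145}) are linear combinations of Grassmann monomials of degree exactly 5 in the generators a_S; in particular, the degree-3 parts of the two sides of the pentagon equation for the g's coincide with those for the f's. -/
/-- `c_{i₁i₂i₃i₄} = ∏_{1 ≤ k < l ≤ 4} ζ_{i_k i_l}`. -/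
def cc {F : Type*} [Field F] (ζ : Fin 5 → F) (i₁ i₂ i₃ i₄ : Fin 5) : F :=
  (ζ i₁ - ζ i₂) * (ζ i₁ - ζ i₃) * (ζ i₁ - ζ i₄) * (ζ i₂ - ζ i₃) * (ζ i₂ - ζ i₄) * (ζ i₃ - ζ i₄)

/-- The deformed weight `g_{i₁i₂i₃i₄} = f_{i₁i₂i₃i₄} + ε λ c_{i₁i₂i₃i₄}
a_{i₁i₂i₃} a_{i₁i₂i₄} a_{i₁i₃i₄} a_{i₂i₃i₄}`, with orientation sign `eps = ε_{i₁i₂i₃i₄}`. -/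
def gw {F : Type*} [Field F] {Λ : Type*} [Ring Λ] [Algebra F Λ]
    (ζ : Fin 5 → F) (a : Finset (Fin 5) → Λ) (lam eps : F) (i₁ i₂ i₃ i₄ : Fin 5) : Λ :=
  fw ζ a i₁ i₂ i₃ i₄ +
    (eps * lam * cc ζ i₁ i₂ i₃ i₄) •
      (a {i₁, i₂, i₃} * a {i₁, i₂, i₄} * a {i₁, i₃, i₄} * a {i₂, i₃, i₄})

/-- The set of Grassmann monomials of degree exactly `d` in the face generators:
products of `d` distinct generators `a S` with `S` a 3-element subset. -/
def degMonomials {Λ : Type*} [Ring Λ]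
    (a : Finset (Fin 5) → Λ) (d : ℕ) : Set Λ :=
  { x | ∃ l : List (Finset (Fin 5)),
      l.length = d ∧ l.Nodup ∧ (∀ S ∈ l, S.card = 3) ∧ x = (l.map a).prod }

/-! The correction term of each `g` is a multiple of the product of the four face generators of
its tetrahedron, a monomial of degree 4, while each `f` is homogeneous of degree 2. Any two of the
tetrahedra involved share a face, so every product containing two correction terms, even with other
factors in between, repeats a generator and vanishes. Expanding `g g' - f f'` (resp.
`g g' g'' - f f' f''`), only the terms with exactly one correction survive; they are homogeneous of
degree 6 (resp. 8), and each Berezin integral lowers the degree by one. -/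

theorem add_mul_add_sub_mul_of_mul_eq_zero {R : Type*} [Ring R] {f f' x y : R}
    (hxy : x * y = 0) : (f + x) * (f' + y) - f * f' = f * y + x * f' := by
  rw [add_mul, mul_add, mul_add, hxy]
  abel

theorem add_mul_add_mul_add_sub_mul_mul_of_mul_eq_zero {R : Type*} [Ring R]
    {f f' f'' x y z : R} (hxy : x * y = 0) (hyz : y * z = 0) (hxz : x * f' * z = 0) :
    (f + x) * (f' + y) * (f'' + z) - f * f' * f'' =
      f * f' * z + f * y * f'' + x * f' * f'' := by
  have expand : (f + x) * (f' + y) * (f'' + z) = f * f' * f'' + f * f' * z + f * y * f''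
      + x * f' * f'' + f * (y * z) + x * f' * z + x * y * (f'' + z) := by
    noncomm_ring
  rw [expand, hxy, hyz, hxz]
  noncomm_ring

def homogeneousSpan (F : Type*) [Field F] {Λ : Type*} [Ring Λ] [Algebra F Λ]
    (a : Finset (Fin 5) → Λ) (d : ℕ) : Submodule F Λ :=
  Submodule.span F (degMonomials a d)

def tetraFaces {α : Type*} [DecidableEq α] (i₁ i₂ i₃ i₄ : α) : List (Finset α) :=
  [{i₁, i₂, i₃}, {i₁, i₂, i₄}, {i₁, i₃, i₄}, {i₂, i₃, i₄}]

theorem card_of_mem_tetraFaces {α : Type*} [DecidableEq α] {i₁ i₂ i₃ i₄ : α}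
    (hi : [i₁, i₂, i₃, i₄].Nodup) : ∀ S ∈ tetraFaces i₁ i₂ i₃ i₄, S.card = 3 := by
  simp only [List.nodup_cons, List.mem_cons, List.not_mem_nil, or_false, not_or] at hi
  obtain ⟨⟨h₁₂, h₁₃, h₁₄⟩, ⟨h₂₃, h₂₄⟩, h₃₄, -⟩ := hi
  simp only [tetraFaces, List.mem_cons, List.not_mem_nil, or_false]
  rintro S (rfl | rfl | rfl | rfl) <;>
    exact Finset.card_eq_three.mpr ⟨_, _, _, ‹_›, ‹_›, ‹_›, rfl⟩

section Grassmann

variable {F : Type*} [Field F] {Λ : Type*} [Ring Λ] [Algebra F Λ] {a : Finset (Fin 5) → Λ}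

theorem generator_mul_list_prod (hanti : ∀ S T, a S * a T = -(a T * a S))
    (S : Finset (Fin 5)) (l : List (Finset (Fin 5))) :
    a S * (l.map a).prod = ((-1 : F) ^ l.length) • ((l.map a).prod * a S) := by
  induction l with
  | nil => simp
  | cons T t ih =>
    simp only [List.map_cons, List.prod_cons, List.length_cons]
    rw [← mul_assoc, hanti S T, neg_mul, mul_assoc, ih, mul_smul_comm, pow_succ,
      mul_neg_one, neg_smul, mul_assoc]

theorem generator_mul_list_prod_eq_zero (hanti : ∀ S T, a S * a T = -(a T * a S))
    (hsq : ∀ S, a S * a S = 0) {S : Finset (Fin 5)} {l : List (Finset (Fin 5))} (hS : S ∈ l) :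
    a S * (l.map a).prod = 0 := by
  induction l with
  | nil => exact absurd hS List.not_mem_nil
  | cons T t ih =>
    rw [List.map_cons, List.prod_cons, ← mul_assoc]
    rcases List.mem_cons.mp hS with rfl | hS
    · rw [hsq, zero_mul]
    · rw [hanti, neg_mul, mul_assoc, ih hS, mul_zero, neg_zero]

theorem list_prod_eq_zero_of_not_nodup (hanti : ∀ S T, a S * a T = -(a T * a S))
    (hsq : ∀ S, a S * a S = 0) {l : List (Finset (Fin 5))} (hl : ¬ l.Nodup) :
    (l.map a).prod = 0 := by
  induction l with
  | nil => exact absurd List.nodup_nil hl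
  | cons S t ih =>
    rw [List.map_cons, List.prod_cons]
    by_cases hS : S ∈ t
    · exact generator_mul_list_prod_eq_zero hanti hsq hS
    · rw [ih fun ht => hl (List.nodup_cons.mpr ⟨hS, ht⟩), mul_zero]

theorem list_prod_mem_homogeneousSpan (hanti : ∀ S T, a S * a T = -(a T * a S))
    (hsq : ∀ S, a S * a S = 0) {l : List (Finset (Fin 5))} (hcard : ∀ S ∈ l, S.card = 3) :
    (l.map a).prod ∈ homogeneousSpan F a l.length := by
  by_cases hl : l.Nodup
  · exact Submodule.subset_span ⟨l, rfl, hl, hcard, rfl⟩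
  · rw [list_prod_eq_zero_of_not_nodup hanti hsq hl]
    exact zero_mem _

theorem mul_mem_homogeneousSpan (hanti : ∀ S T, a S * a T = -(a T * a S))
    (hsq : ∀ S, a S * a S = 0) {d₁ d₂ : ℕ} {x y : Λ} (hx : x ∈ homogeneousSpan F a d₁)
    (hy : y ∈ homogeneousSpan F a d₂) : x * y ∈ homogeneousSpan F a (d₁ + d₂) := by
  have hxy := Submodule.mul_mem_mul hx hy
  rw [homogeneousSpan, homogeneousSpan, Submodule.span_mul_span] at hxy
  refine Submodule.span_le.mpr ?_ hxy
  rintro _ ⟨_, ⟨l₁, rfl, -, hcard₁, rfl⟩, _, ⟨l₂, rfl, -, hcard₂, rfl⟩, rfl⟩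
  dsimp only
  rw [← List.prod_append, ← List.map_append, ← List.length_append]
  exact list_prod_mem_homogeneousSpan hanti hsq fun S hS => (List.mem_append.mp hS).elim
    (hcard₁ S) (hcard₂ S)

theorem berezin_mem_homogeneousSpan (hanti : ∀ S T, a S * a T = -(a T * a S))
    {S : Finset (Fin 5)} {B : Λ →ₗ[F] Λ} (hB : IsBerezin F a S B) {d : ℕ} {x : Λ}
    (hx : x ∈ homogeneousSpan F a (d + 1)) : B x ∈ homogeneousSpan F a d := by
  have list_prod_mem_notInvolving (l : List (Finset (Fin 5))) (hS : S ∉ l) :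
      (l.map a).prod ∈ notInvolving F a S :=
    list_prod_mem fun _ hx => by
      obtain ⟨T, hT, rfl⟩ := List.mem_map.mp hx
      exact Algebra.subset_adjoin ⟨T, fun h => hS (h ▸ hT), rfl⟩
  refine (Submodule.span_le (p := (homogeneousSpan F a d).comap B)).mpr ?_ hx
  rintro _ ⟨l, hlen, hnd, hcard, rfl⟩
  by_cases hS : S ∈ l
  · obtain ⟨l₁, l₂, rfl⟩ := List.append_of_mem hS
    rw [List.nodup_middle, List.nodup_cons] at hnd
    have move_to_end : ((l₁ ++ S :: l₂).map a).prod
        = ((-1 : F) ^ l₂.length) • (((l₁ ++ l₂).map a).prod * a S) := by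
      rw [List.map_append, List.prod_append, List.map_cons, List.prod_cons,
        generator_mul_list_prod (F := F) hanti, mul_smul_comm, List.map_append,
        List.prod_append, mul_assoc]
    rw [SetLike.mem_coe, Submodule.mem_comap, move_to_end, map_smul,
      hB.2 _ (list_prod_mem_notInvolving _ hnd.1)]
    refine Submodule.smul_mem _ _ (Submodule.subset_span ⟨l₁ ++ l₂, ?_, hnd.2, ?_, rfl⟩)
    · simp only [List.length_append, List.length_cons] at hlen ⊢
      omega
    · exact fun T hT => hcard T (List.mem_append.mpr ((List.mem_append.mp hT).imp id
        (List.mem_cons_of_mem _)))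
  · rw [SetLike.mem_coe, Submodule.mem_comap, hB.1 _ (list_prod_mem_notInvolving l hS)]
    exact zero_mem _

theorem list_prod_mul_mul_list_prod_eq_zero (hanti : ∀ S T, a S * a T = -(a T * a S))
    (hsq : ∀ S, a S * a S = 0) {S : Finset (Fin 5)} {l₁ l₂ : List (Finset (Fin 5))}
    (h₁ : S ∈ l₁) (h₂ : S ∈ l₂) {d : ℕ} {u : Λ} (hu : u ∈ homogeneousSpan F a d) :
    (l₁.map a).prod * u * (l₂.map a).prod = 0 := by
  induction hu using Submodule.span_induction with
  | mem _ hm =>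
    obtain ⟨l, -, -, -, rfl⟩ := hm
    rw [← List.prod_append, ← List.prod_append, ← List.map_append, ← List.map_append]
    refine list_prod_eq_zero_of_not_nodup hanti hsq fun hnd => ?_
    have hSS : [S, S].Sublist (l₁ ++ l ++ l₂) :=
      (List.singleton_sublist.mpr (List.mem_append_left l h₁)).append
        (List.singleton_sublist.mpr h₂)
    exact List.not_nodup_pair S (hnd.sublist hSS)
  | zero => rw [mul_zero, zero_mul]
  | add _ _ _ _ hx hy => rw [mul_add, add_mul, hx, hy, add_zero]
  | smul c _ _ hx => rw [mul_smul_comm, smul_mul_assoc, hx, smul_zero]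

theorem smul_list_prod_mul_mul_smul_list_prod_eq_zero
    (hanti : ∀ S T, a S * a T = -(a T * a S)) (hsq : ∀ S, a S * a S = 0) {S : Finset (Fin 5)}
    {l₁ l₂ : List (Finset (Fin 5))} (h₁ : S ∈ l₁) (h₂ : S ∈ l₂) (c c' : F) {d : ℕ} {u : Λ}
    (hu : u ∈ homogeneousSpan F a d) :
    c • (l₁.map a).prod * u * (c' • (l₂.map a).prod) = 0 := by
  simp only [smul_mul_assoc, mul_smul_comm,
    list_prod_mul_mul_list_prod_eq_zero hanti hsq h₁ h₂ hu, smul_zero]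

theorem smul_list_prod_mul_smul_list_prod_eq_zero
    (hanti : ∀ S T, a S * a T = -(a T * a S)) (hsq : ∀ S, a S * a S = 0) {S : Finset (Fin 5)}
    {l₁ l₂ : List (Finset (Fin 5))} (h₁ : S ∈ l₁) (h₂ : S ∈ l₂) (c c' : F) :
    c • (l₁.map a).prod * (c' • (l₂.map a).prod) = 0 := by
  have one_mem : (1 : Λ) ∈ homogeneousSpan F a 0 := by
    simpa using list_prod_mem_homogeneousSpan (l := []) hanti hsq (F := F) (by simp)
  simpa only [mul_one] using
    smul_list_prod_mul_mul_smul_list_prod_eq_zero hanti hsq h₁ h₂ c c' one_mem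

theorem smul_tetraFaces_prod_mem_homogeneousSpan (hanti : ∀ S T, a S * a T = -(a T * a S))
    (hsq : ∀ S, a S * a S = 0) (i₁ i₂ i₃ i₄ : Fin 5) (hi : [i₁, i₂, i₃, i₄].Nodup) (c : F) :
    c • ((tetraFaces i₁ i₂ i₃ i₄).map a).prod ∈ homogeneousSpan F a 4 := by
  have hP := list_prod_mem_homogeneousSpan (F := F) hanti hsq (card_of_mem_tetraFaces hi)
  exact Submodule.smul_mem _ c hP

theorem fw_mem_homogeneousSpan (hanti : ∀ S T, a S * a T = -(a T * a S))
    (hsq : ∀ S, a S * a S = 0) (ζ : Fin 5 → F) (i₁ i₂ i₃ i₄ : Fin 5)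
    (hi : [i₁, i₂, i₃, i₄].Nodup) : fw ζ a i₁ i₂ i₃ i₄ ∈ homogeneousSpan F a 2 := by
  have face {S : Finset (Fin 5)} (hS : S ∈ tetraFaces i₁ i₂ i₃ i₄) :
      a S ∈ homogeneousSpan F a 1 := by
    simpa using list_prod_mem_homogeneousSpan (F := F) hanti hsq (l := [S])
      (by simpa using card_of_mem_tetraFaces hi S hS)
  have edge {S T : Finset (Fin 5)} (hS : S ∈ tetraFaces i₁ i₂ i₃ i₄)
      (hT : T ∈ tetraFaces i₁ i₂ i₃ i₄) (c : F) : c • (a S * a T) ∈ homogeneousSpan F a 2 := by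
    have hST := mul_mem_homogeneousSpan hanti hsq (face hS) (face hT)
    exact Submodule.smul_mem _ c hST
  unfold fw
  refine add_mem (sub_mem (add_mem (add_mem (sub_mem ?_ ?_) ?_) ?_) ?_) ?_ <;>
    exact edge (by simp [tetraFaces]) (by simp [tetraFaces]) _

theorem gw_eq (ζ : Fin 5 → F) (lam eps : F) (i₁ i₂ i₃ i₄ : Fin 5) :
    gw ζ a lam eps i₁ i₂ i₃ i₄ = fw ζ a i₁ i₂ i₃ i₄ +
      (eps * lam * cc ζ i₁ i₂ i₃ i₄) • ((tetraFaces i₁ i₂ i₃ i₄).map a).prod := by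
  simp [gw, tetraFaces, mul_assoc]

end Grassmann

theorem g_minus_f_degree_five_general
    {F : Type*} [Field F] {Λ : Type*} [Ring Λ] [Algebra F Λ]
    (ζ : Fin 5 → F)
    (lam : F)
    (a : Finset (Fin 5) → Λ)
    (hanti : ∀ S T, a S * a T = -(a T * a S))
    (hsq : ∀ S, a S * a S = 0)
    (B123 B145 B245 B345 : Λ →ₗ[F] Λ)
    (hB123 : IsBerezin F a ({0, 1, 2} : Finset (Fin 5)) B123)
    (hB145 : IsBerezin F a ({0, 3, 4} : Finset (Fin 5)) B145)
    (hB245 : IsBerezin F a ({1, 3, 4} : Finset (Fin 5)) B245)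
    (hB345 : IsBerezin F a ({2, 3, 4} : Finset (Fin 5)) B345)
 :
    B123 (gw ζ a lam 1 0 1 2 3 * gw ζ a lam (-1) 0 1 2 4) -
        B123 (fw ζ a 0 1 2 3 * fw ζ a 0 1 2 4) ∈
      Submodule.span F (degMonomials a 5) ∧
    (ζ 3 - ζ 4)⁻¹ •
        (B145 (B245 (B345
            (gw ζ a lam (-1) 0 1 3 4 * gw ζ a lam (-1) 1 2 3 4 * gw ζ a lam 1 0 2 3 4))) -
          B145 (B245 (B345 (fw ζ a 0 1 3 4 * fw ζ a 1 2 3 4 * fw ζ a 0 2 3 4)))) ∈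
      Submodule.span F (degMonomials a 5) := by
  have mul_mem := @mul_mem_homogeneousSpan F _ Λ _ _ a hanti hsq
  have fw_mem := fw_mem_homogeneousSpan hanti hsq ζ
  have correction_mem := smul_tetraFaces_prod_mem_homogeneousSpan (F := F) hanti hsq
  have f₀₁₂₃ := fw_mem 0 1 2 3 (by decide)
  have f₀₁₂₄ := fw_mem 0 1 2 4 (by decide)
  have f₀₁₃₄ := fw_mem 0 1 3 4 (by decide)
  have f₁₂₃₄ := fw_mem 1 2 3 4 (by decide)
  have f₀₂₃₄ := fw_mem 0 2 3 4 (by decide)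
  have x₀₁₂₃ := correction_mem 0 1 2 3 (by decide)
  have x₀₁₂₄ := correction_mem 0 1 2 4 (by decide)
  have x₀₁₃₄ := correction_mem 0 1 3 4 (by decide)
  have x₁₂₃₄ := correction_mem 1 2 3 4 (by decide)
  have x₀₂₃₄ := correction_mem 0 2 3 4 (by decide)
  have adjacent_eq_zero (S : Finset (Fin 5)) {l₁ l₂ : List (Finset (Fin 5))} (h₁ : S ∈ l₁)
      (h₂ : S ∈ l₂) := smul_list_prod_mul_smul_list_prod_eq_zero (F := F) hanti hsq h₁ h₂
  have separated_eq_zero (S : Finset (Fin 5)) {l₁ l₂ : List (Finset (Fin 5))} (h₁ : S ∈ l₁)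
      (h₂ : S ∈ l₂) := smul_list_prod_mul_mul_smul_list_prod_eq_zero (F := F) hanti hsq h₁ h₂
  simp only [gw_eq]
  constructor
  · rw [← map_sub, add_mul_add_sub_mul_of_mul_eq_zero
      (adjacent_eq_zero {0, 1, 2} (by decide) (by decide) _ _)]
    exact berezin_mem_homogeneousSpan hanti hB123 (d := 5)
      (add_mem (mul_mem f₀₁₂₃ (x₀₁₂₄ _) :) (mul_mem (x₀₁₂₃ _) f₀₁₂₄ :))
  · rw [← map_sub, ← map_sub, ← map_sub, add_mul_add_mul_add_sub_mul_mul_of_mul_eq_zero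
      (adjacent_eq_zero {1, 3, 4} (by decide) (by decide) _ _)
      (adjacent_eq_zero {2, 3, 4} (by decide) (by decide) _ _)
      (separated_eq_zero {0, 3, 4} (by decide) (by decide) _ _ f₁₂₃₄)]
    refine Submodule.smul_mem _ _ (berezin_mem_homogeneousSpan hanti hB145 (d := 5)
      (berezin_mem_homogeneousSpan hanti hB245 (berezin_mem_homogeneousSpan hanti hB345 ?_)))
    exact add_mem (add_mem (mul_mem (mul_mem f₀₁₃₄ f₁₂₃₄) (x₀₂₃₄ _) :)
      (mul_mem (mul_mem f₀₁₃₄ (x₁₂₃₄ _)) f₀₂₃₄ :)) (mul_mem (mul_mem (x₀₁₃₄ _) f₁₂₃₄) f₀₂₃₄ :)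

/-- The differences between the two sides of the pentagon equation for the `g`'s and
for the `f`'s are linear combinations of Grassmann monomials of degree exactly 5;
in particular the degree-3 parts of the two sides for the `g`'s coincide with those
for the `f`'s. -/
theorem g_minus_f_degree_five
    {F : Type*} [Field F] {Λ : Type*} [Ring Λ] [Algebra F Λ]
    (hchar : (2 : F) ≠ 0)
    (ζ : Fin 5 → F)
    (h45 : ζ 3 ≠ ζ 4) (lam : F)
    (a : Finset (Fin 5) → Λ)
    (hanti : ∀ S T, a S * a T = -(a T * a S))
    (hsq : ∀ S, a S * a S = 0)
    (B123 B145 B245 B345 : Λ →ₗ[F] Λ)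
    (hB123 : IsBerezin F a ({0, 1, 2} : Finset (Fin 5)) B123)
    (hB145 : IsBerezin F a ({0, 3, 4} : Finset (Fin 5)) B145)
    (hB245 : IsBerezin F a ({1, 3, 4} : Finset (Fin 5)) B245)
    (hB345 : IsBerezin F a ({2, 3, 4} : Finset (Fin 5)) B345)
 :
    B123 (gw ζ a lam 1 0 1 2 3 * gw ζ a lam (-1) 0 1 2 4) -
        B123 (fw ζ a 0 1 2 3 * fw ζ a 0 1 2 4) ∈
      Submodule.span F (degMonomials a 5) ∧
    (ζ 3 - ζ 4)⁻¹ •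
        (B145 (B245 (B345
            (gw ζ a lam (-1) 0 1 3 4 * gw ζ a lam (-1) 1 2 3 4 * gw ζ a lam 1 0 2 3 4))) -
          B145 (B245 (B345 (fw ζ a 0 1 3 4 * fw ζ a 1 2 3 4 * fw ζ a 0 2 3 4)))) ∈
      Submodule.span F (degMonomials a 5) :=
  g_minus_f_degree_five_general ζ lam a hanti hsq B123 B145 B245 B345 hB123 hB145 hB245 hB345
end

section
/- Assume ζ_4 ≠ ζ_5 and let μ ∈ F. Then both differences ∫ h_{1234} h_{1235} da_{123} − ∫ f_{1234} f_{1235} da_{123} and (1/ζ_{45})·(∭ h_{1245} h_{2345} h_{1345} da_{345} da_{245} da_{145} − ∭ f_{1245} f_{2345} f_{1345} da_{345} da_{245} da_{145}) are linear combinations of Grassmann monomials of degree exactly 1 in the generators a_S; in particular, the degree-3 parts of the two sides of the pentagon equation for the h's coincide with those for the f's. -/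
/-- The deformed weight `h_{i₁i₂i₃i₄} = f_{i₁i₂i₃i₄} + ε μ` (with orientation
sign `eps = ε_{i₁i₂i₃i₄}`, and `μ` times the unit of `Λ`). -/
def hw {F : Type*} [Field F] {Λ : Type*} [Ring Λ] [Algebra F Λ]
    (ζ : Fin 5 → F) (a : Finset (Fin 5) → Λ) (mu eps : F) (i₁ i₂ i₃ i₄ : Fin 5) : Λ :=
  fw ζ a i₁ i₂ i₃ i₄ + (eps * mu) • (1 : Λ)

/-! Each `f` is homogeneous of degree 2 and `h = f + εμ`, so expanding a product of `n`
weights, the `h`-product and the `f`-product differ by homogeneous terms of degrees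
`2(n - 1), 2(n - 2), …, 0`. A Berezin integral lowers the degree by one (after moving its
generator to the right, which costs only a sign) and kills the constants. With one integral
of two weights, or three integrals of three weights, only the terms of degree `2(n - 1)`
survive, and they land in degree 1. -/

section Anticommuting

variable {ι Λ : Type*} [Ring Λ] {a : ι → Λ}

theorem mul_prod_map_of_anticomm (hanti : ∀ S T, a S * a T = -(a T * a S)) (i : ι)
    (l : List ι) : a i * (l.map a).prod = (-1 : ℤ) ^ l.length • ((l.map a).prod * a i) := by
  induction l with
  | nil => simp
  | cons S t ih =>
    simp only [List.map_cons, List.prod_cons, List.length_cons]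
    rw [← mul_assoc, hanti, neg_mul, mul_assoc, ih, mul_smul_comm, pow_succ, mul_neg_one,
      neg_smul, mul_assoc]

theorem prod_map_eq_zero_of_not_nodup (hanti : ∀ S T, a S * a T = -(a T * a S))
    (hsq : ∀ S, a S * a S = 0) {l : List ι} (hl : ¬ l.Nodup) : (l.map a).prod = 0 := by
  induction l with
  | nil => exact absurd List.nodup_nil hl
  | cons x t ih =>
    rw [List.map_cons, List.prod_cons]
    by_cases hx : x ∈ t
    · obtain ⟨s, u, rfl⟩ := List.append_of_mem hx
      simp only [List.map_append, List.prod_append, List.map_cons, List.prod_cons]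
      rw [← mul_assoc, mul_prod_map_of_anticomm hanti, smul_mul_assoc, mul_assoc,
        ← mul_assoc (a x), hsq, zero_mul, mul_zero, smul_zero]
    · rw [ih fun hn => hl (List.nodup_cons.2 ⟨hx, hn⟩), mul_zero]

theorem prod_map_mem_notInvolving {F : Type*} [Field F] [Algebra F Λ] {i : ι} {l : List ι}
    (hi : i ∉ l) : (l.map a).prod ∈ notInvolving F a i :=
  Subalgebra.list_prod_mem _ fun _ hx => by
    obtain ⟨S, hS, rfl⟩ := List.mem_map.1 hx
    exact Algebra.subset_adjoin ⟨S, fun h => hi (h ▸ hS), rfl⟩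

end Anticommuting

section Degree

variable {F Λ : Type*} [Field F] [Ring Λ] [Algebra F Λ] {a : Finset (Fin 5) → Λ}

theorem one_mem_span_degMonomials_zero : (1 : Λ) ∈ Submodule.span F (degMonomials a 0) :=
  Submodule.subset_span ⟨[], rfl, List.nodup_nil, by simp, by simp⟩

theorem mem_span_degMonomials_one {S : Finset (Fin 5)} (hS : S.card = 3) :
    a S ∈ Submodule.span F (degMonomials a 1) :=
  Submodule.subset_span ⟨[S], rfl, List.nodup_singleton S, by simpa using hS, by simp⟩

theorem prod_map_mem_span_degMonomials (hanti : ∀ S T, a S * a T = -(a T * a S))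
    (hsq : ∀ S, a S * a S = 0) {l : List (Finset (Fin 5))} (hl : ∀ S ∈ l, S.card = 3) :
    (l.map a).prod ∈ Submodule.span F (degMonomials a l.length) := by
  by_cases h : l.Nodup
  · exact Submodule.subset_span ⟨l, rfl, h, hl, rfl⟩
  · rw [prod_map_eq_zero_of_not_nodup hanti hsq h]
    exact zero_mem _

theorem mul_mem_span_degMonomials (hanti : ∀ S T, a S * a T = -(a T * a S))
    (hsq : ∀ S, a S * a S = 0) {d e : ℕ} {x y : Λ}
    (hx : x ∈ Submodule.span F (degMonomials a d))
    (hy : y ∈ Submodule.span F (degMonomials a e)) :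
    x * y ∈ Submodule.span F (degMonomials a (d + e)) := by
  induction hx using Submodule.span_induction with
  | mem x hx =>
    induction hy using Submodule.span_induction with
    | mem y hy =>
      obtain ⟨l₁, rfl, -, hl₁, rfl⟩ := hx
      obtain ⟨l₂, rfl, -, hl₂, rfl⟩ := hy
      rw [← List.prod_append, ← List.map_append, ← List.length_append]
      exact prod_map_mem_span_degMonomials hanti hsq fun S hS =>
        (List.mem_append.1 hS).elim (hl₁ S) (hl₂ S)
    | zero => simp
    | add y z _ _ hy hz => rw [mul_add]; exact add_mem hy hz
    | smul c y _ hy => rw [mul_smul_comm]; exact Submodule.smul_mem _ _ hy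
  | zero => simp
  | add x z _ _ hx hz => rw [add_mul]; exact add_mem hx hz
  | smul c x _ hx => rw [smul_mul_assoc]; exact Submodule.smul_mem _ _ hx

theorem fw_mem_span_degMonomials_two (hanti : ∀ S T, a S * a T = -(a T * a S))
    (hsq : ∀ S, a S * a S = 0) (ζ : Fin 5 → F) {i₁ i₂ i₃ i₄ : Fin 5}
    (h : [i₁, i₂, i₃, i₄].Nodup) :
    fw ζ a i₁ i₂ i₃ i₄ ∈ Submodule.span F (degMonomials a 2) := by
  simp only [List.nodup_cons, List.mem_cons, List.not_mem_nil, not_or] at h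
  obtain ⟨⟨h₁₂, h₁₃, h₁₄, -⟩, ⟨h₂₃, h₂₄, -⟩, ⟨h₃₄, -⟩, -⟩ := h
  have face {i j k : Fin 5} (hij : i ≠ j) (hik : i ≠ k) (hjk : j ≠ k) :
      a {i, j, k} ∈ Submodule.span F (degMonomials a 1) :=
    mem_span_degMonomials_one (Finset.card_eq_three.2 ⟨i, j, k, hij, hik, hjk, rfl⟩)
  have pair {x y : Λ} (hx : x ∈ Submodule.span F (degMonomials a 1))
      (hy : y ∈ Submodule.span F (degMonomials a 1)) (c : F) :
      c • (x * y) ∈ Submodule.span F (degMonomials a 2) :=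
    Submodule.smul_mem _ c (mul_mem_span_degMonomials (d := 1) (e := 1) hanti hsq hx hy)
  have f₁₂₃ : a {i₁, i₂, i₃} ∈ Submodule.span F (degMonomials a 1) := face h₁₂ h₁₃ h₂₃
  have f₁₂₄ : a {i₁, i₂, i₄} ∈ Submodule.span F (degMonomials a 1) := face h₁₂ h₁₄ h₂₄
  have f₁₃₄ : a {i₁, i₃, i₄} ∈ Submodule.span F (degMonomials a 1) := face h₁₃ h₁₄ h₃₄
  have f₂₃₄ : a {i₂, i₃, i₄} ∈ Submodule.span F (degMonomials a 1) := face h₂₃ h₂₄ h₃₄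
  unfold fw
  exact add_mem (sub_mem (add_mem (add_mem (sub_mem (pair f₁₂₃ f₁₂₄ _) (pair f₁₂₃ f₁₃₄ _))
    (pair f₁₂₄ f₁₃₄ _)) (pair f₁₂₃ f₂₃₄ _)) (pair f₁₂₄ f₂₃₄ _)) (pair f₁₃₄ f₂₃₄ _)

end Degree

namespace IsBerezin

variable {F Λ : Type*} [Field F] [Ring Λ] [Algebra F Λ] {a : Finset (Fin 5) → Λ}
  {i : Finset (Fin 5)} {B : Λ →ₗ[F] Λ}

theorem apply_eq_zero_of_mem_span_degMonomials_zero (hB : IsBerezin F a i B) {x : Λ}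
    (hx : x ∈ Submodule.span F (degMonomials a 0)) : B x = 0 := by
  induction hx using Submodule.span_induction with
  | mem x hx =>
    obtain ⟨l, hl, -, -, rfl⟩ := hx
    rw [List.length_eq_zero_iff.1 hl]
    exact hB.1 _ (one_mem _)
  | zero => exact map_zero B
  | add x y _ _ hx hy => rw [map_add, hx, hy, add_zero]
  | smul c x _ hx => rw [map_smul, hx, smul_zero]

theorem apply_mem_span_degMonomials (hanti : ∀ S T, a S * a T = -(a T * a S))
    (hB : IsBerezin F a i B) {d : ℕ} {x : Λ}
    (hx : x ∈ Submodule.span F (degMonomials a (d + 1))) :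
    B x ∈ Submodule.span F (degMonomials a d) := by
  induction hx using Submodule.span_induction with
  | mem x hx =>
    obtain ⟨l, hl, hnd, hc, rfl⟩ := hx
    by_cases hi : i ∈ l
    · obtain ⟨s, t, rfl⟩ := List.append_of_mem hi
      obtain ⟨hi', hst⟩ := List.nodup_cons.1 (List.nodup_middle.1 hnd)
      have hprod : ((s ++ i :: t).map a).prod
          = (-1 : ℤ) ^ t.length • (((s ++ t).map a).prod * a i) := by
        simp only [List.map_append, List.prod_append, List.map_cons, List.prod_cons]
        rw [mul_prod_map_of_anticomm hanti, mul_smul_comm, ← mul_assoc]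
      rw [hprod, map_zsmul, hB.2 _ (prod_map_mem_notInvolving hi')]
      apply zsmul_mem
      refine Submodule.subset_span ⟨s ++ t, ?_, hst, ?_, rfl⟩
      · simp only [List.length_append, List.length_cons] at hl ⊢
        omega
      · exact fun S hS => hc S (List.mem_append.2 ((List.mem_append.1 hS).imp id
          (List.mem_cons_of_mem i)))
    · rw [hB.1 _ (prod_map_mem_notInvolving hi)]
      exact zero_mem _
  | zero => simp
  | add x y _ _ hx hy => rw [map_add]; exact add_mem hx hy
  | smul c x _ hx => rw [map_smul]; exact Submodule.smul_mem _ _ hx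

end IsBerezin

section Expansion

variable {R A : Type*} [CommRing R] [Ring A] [Algebra R A]

theorem add_smul_one_mul_add_smul_one_sub_mul (x y : A) (c d : R) :
    (x + c • 1) * (y + d • 1) - x * y = d • x + c • y + (c * d) • 1 := by
  simp only [add_mul, mul_add, smul_mul_assoc, mul_smul_comm, one_mul, mul_one]
  module

theorem add_smul_one_mul_add_smul_one_mul_add_smul_one_sub_mul (x y z : A) (c d e : R) :
    (x + c • 1) * (y + d • 1) * (z + e • 1) - x * y * z
      = e • (x * y) + d • (x * z) + c • (y * z) + (d * e) • x + (c * e) • y + (c * d) • z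
        + (c * d * e) • 1 := by
  simp only [add_mul, mul_add, smul_mul_assoc, mul_smul_comm, one_mul, mul_one, mul_assoc]
  module

end Expansion

section Integration

variable {F Λ : Type*} [Field F] [Ring Λ] [Algebra F Λ] {a : Finset (Fin 5) → Λ}

theorem IsBerezin.apply_mul_add_smul_one_sub_mem (hanti : ∀ S T, a S * a T = -(a T * a S))
    {i : Finset (Fin 5)} {B : Λ →ₗ[F] Λ} (hB : IsBerezin F a i B) {x y : Λ}
    (hx : x ∈ Submodule.span F (degMonomials a 2))
    (hy : y ∈ Submodule.span F (degMonomials a 2)) (c d : F) :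
    B ((x + c • 1) * (y + d • 1)) - B (x * y) ∈ Submodule.span F (degMonomials a 1) := by
  rw [← map_sub, add_smul_one_mul_add_smul_one_sub_mul, map_add, map_add, map_smul, map_smul,
    map_smul, hB.apply_eq_zero_of_mem_span_degMonomials_zero one_mem_span_degMonomials_zero,
    smul_zero, add_zero]
  exact add_mem (Submodule.smul_mem _ _ (hB.apply_mem_span_degMonomials hanti hx))
    (Submodule.smul_mem _ _ (hB.apply_mem_span_degMonomials hanti hy))

theorem berezin_three_mul_add_smul_one_sub_mem (hanti : ∀ S T, a S * a T = -(a T * a S))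
    (hsq : ∀ S, a S * a S = 0) {i₁ i₂ i₃ : Finset (Fin 5)} {B₁ B₂ B₃ : Λ →ₗ[F] Λ}
    (hB₁ : IsBerezin F a i₁ B₁) (hB₂ : IsBerezin F a i₂ B₂) (hB₃ : IsBerezin F a i₃ B₃)
    {x y z : Λ} (hx : x ∈ Submodule.span F (degMonomials a 2))
    (hy : y ∈ Submodule.span F (degMonomials a 2))
    (hz : z ∈ Submodule.span F (degMonomials a 2)) (c d e : F) :
    B₁ (B₂ (B₃ ((x + c • 1) * (y + d • 1) * (z + e • 1)))) - B₁ (B₂ (B₃ (x * y * z))) ∈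
      Submodule.span F (degMonomials a 1) := by
  have degree_four {w : Λ} (hw : w ∈ Submodule.span F (degMonomials a 4)) :
      B₁ (B₂ (B₃ w)) ∈ Submodule.span F (degMonomials a 1) :=
    hB₁.apply_mem_span_degMonomials hanti <| hB₂.apply_mem_span_degMonomials hanti <|
      hB₃.apply_mem_span_degMonomials hanti hw
  have degree_two {w : Λ} (hw : w ∈ Submodule.span F (degMonomials a 2)) :
      B₁ (B₂ (B₃ w)) = 0 :=
    hB₁.apply_eq_zero_of_mem_span_degMonomials_zero <| hB₂.apply_mem_span_degMonomials hanti <|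
      hB₃.apply_mem_span_degMonomials hanti hw
  have degree_zero : B₁ (B₂ (B₃ 1)) = 0 := by
    rw [hB₃.apply_eq_zero_of_mem_span_degMonomials_zero one_mem_span_degMonomials_zero,
      map_zero, map_zero]
  have mul {u v : Λ} (hu : u ∈ Submodule.span F (degMonomials a 2))
      (hv : v ∈ Submodule.span F (degMonomials a 2)) :
      u * v ∈ Submodule.span F (degMonomials a 4) :=
    mul_mem_span_degMonomials (d := 2) (e := 2) hanti hsq hu hv
  rw [← map_sub, ← map_sub, ← map_sub,
    add_smul_one_mul_add_smul_one_mul_add_smul_one_sub_mul]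
  simp only [map_add, map_smul, degree_two hx, degree_two hy, degree_two hz, degree_zero,
    smul_zero, add_zero]
  exact add_mem (add_mem (Submodule.smul_mem _ _ (degree_four (mul hx hy)))
    (Submodule.smul_mem _ _ (degree_four (mul hx hz))))
    (Submodule.smul_mem _ _ (degree_four (mul hy hz)))

end Integration

theorem h_minus_f_degree_one_general
    {F : Type*} [Field F] {Λ : Type*} [Ring Λ] [Algebra F Λ]
    (ζ : Fin 5 → F)
    (mu : F)
    (a : Finset (Fin 5) → Λ)
    (hanti : ∀ S T, a S * a T = -(a T * a S))
    (hsq : ∀ S, a S * a S = 0)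
    (B123 B145 B245 B345 : Λ →ₗ[F] Λ)
    (hB123 : IsBerezin F a ({0, 1, 2} : Finset (Fin 5)) B123)
    (hB145 : IsBerezin F a ({0, 3, 4} : Finset (Fin 5)) B145)
    (hB245 : IsBerezin F a ({1, 3, 4} : Finset (Fin 5)) B245)
    (hB345 : IsBerezin F a ({2, 3, 4} : Finset (Fin 5)) B345)
 :
    B123 (hw ζ a mu 1 0 1 2 3 * hw ζ a mu (-1) 0 1 2 4) -
        B123 (fw ζ a 0 1 2 3 * fw ζ a 0 1 2 4) ∈
      Submodule.span F (degMonomials a 1) ∧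
    (ζ 3 - ζ 4)⁻¹ •
        (B145 (B245 (B345
            (hw ζ a mu (-1) 0 1 3 4 * hw ζ a mu (-1) 1 2 3 4 * hw ζ a mu 1 0 2 3 4))) -
          B145 (B245 (B345 (fw ζ a 0 1 3 4 * fw ζ a 1 2 3 4 * fw ζ a 0 2 3 4)))) ∈
      Submodule.span F (degMonomials a 1) := by
  have hf {i₁ i₂ i₃ i₄ : Fin 5} (h : [i₁, i₂, i₃, i₄].Nodup) :
      fw ζ a i₁ i₂ i₃ i₄ ∈ Submodule.span F (degMonomials a 2) :=
    fw_mem_span_degMonomials_two hanti hsq ζ h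
  exact ⟨hB123.apply_mul_add_smul_one_sub_mem hanti (hf (by decide)) (hf (by decide)) _ _,
    Submodule.smul_mem _ _ (berezin_three_mul_add_smul_one_sub_mem hanti hsq hB145 hB245 hB345
      (hf (by decide)) (hf (by decide)) (hf (by decide)) _ _ _)⟩

/-- The differences between the two sides of the pentagon equation for the `h`'s and
for the `f`'s are linear combinations of Grassmann monomials of degree exactly 1;
in particular the degree-3 parts of the two sides for the `h`'s coincide with those
for the `f`'s. -/
theorem h_minus_f_degree_one
    {F : Type*} [Field F] {Λ : Type*} [Ring Λ] [Algebra F Λ]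
    (hchar : (2 : F) ≠ 0)
    (ζ : Fin 5 → F)
    (h45 : ζ 3 ≠ ζ 4) (mu : F)
    (a : Finset (Fin 5) → Λ)
    (hanti : ∀ S T, a S * a T = -(a T * a S))
    (hsq : ∀ S, a S * a S = 0)
    (B123 B145 B245 B345 : Λ →ₗ[F] Λ)
    (hB123 : IsBerezin F a ({0, 1, 2} : Finset (Fin 5)) B123)
    (hB145 : IsBerezin F a ({0, 3, 4} : Finset (Fin 5)) B145)
    (hB245 : IsBerezin F a ({1, 3, 4} : Finset (Fin 5)) B245)
    (hB345 : IsBerezin F a ({2, 3, 4} : Finset (Fin 5)) B345)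
 :
    B123 (hw ζ a mu 1 0 1 2 3 * hw ζ a mu (-1) 0 1 2 4) -
        B123 (fw ζ a 0 1 2 3 * fw ζ a 0 1 2 4) ∈
      Submodule.span F (degMonomials a 1) ∧
    (ζ 3 - ζ 4)⁻¹ •
        (B145 (B245 (B345
            (hw ζ a mu (-1) 0 1 3 4 * hw ζ a mu (-1) 1 2 3 4 * hw ζ a mu 1 0 2 3 4))) -
          B145 (B245 (B345 (fw ζ a 0 1 3 4 * fw ζ a 1 2 3 4 * fw ζ a 0 2 3 4)))) ∈
      Submodule.span F (degMonomials a 1) :=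
  h_minus_f_degree_one_general ζ mu a hanti hsq B123 B145 B245 B345 hB123 hB145 hB245 hB345
end
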